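/- arXiv:1309.5346 — 4 statements merged into one kernel-verified Lean document; each statement's English description precedes it below -/
import Mathlib

section
/- If |s₂| > 1 and s₁ ≠ 0, then ∫₀^{2π} (−2(s₁ − cos 6θ))/(s₂ + sin 6θ) dθ = −sgn(s₂)·4π·s₁/√(s₂² − 1). In particular, the integrand's denominator never vanishes. -/
/-!
With `b = sign a · √(a² - 1)`, the Weierstrass-type substitution gives the antiderivative
`(t + 2 arctan (cos t / (a + b + sin t))) / b` of `1 / (a + sin t)`, which is continuous on all of
`ℝ` because `|a + b| > 1`; it gains `2π / b` over a period. The `cos t / (a + sin t)` part is the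
derivative of the periodic function `log (a + sin t)` and integrates to zero, and the frequency `6`
is removed by periodicity.
-/

open Real

theorem add_sin_ne_zero {a : ℝ} (ha : 1 < |a|) (t : ℝ) : a + sin t ≠ 0 := by
  intro h
  have := abs_sin_le_one t
  rw [eq_neg_of_add_eq_zero_left h, abs_neg] at ha
  linarith

theorem hasDerivAt_add_two_mul_arctan_cos_div {a b t : ℝ} (hb : b ^ 2 = a ^ 2 - 1)
    (ht : a + sin t ≠ 0) (hbt : a + b + sin t ≠ 0) :
    HasDerivAt (fun t => t + 2 * arctan (cos t / (a + b + sin t))) (b / (a + sin t)) t := by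
  have hquot : HasDerivAt (fun t => cos t / (a + b + sin t))
      ((-sin t * (a + b + sin t) - cos t * cos t) / (a + b + sin t) ^ 2) t :=
    (hasDerivAt_cos t).div ((hasDerivAt_sin t).const_add (a + b)) hbt
  refine ((hasDerivAt_id' t).add (hquot.arctan.const_mul 2)).congr_deriv ?_
  have hpyth := sin_sq_add_cos_sq t
  have hsq : (a + b + sin t) ^ 2 + cos t ^ 2 = 2 * (a + b) * (a + sin t) := by
    linear_combination hpyth + hb
  have hab : a + b ≠ 0 := by
    intro h
    rw [eq_neg_of_add_eq_zero_right h] at hb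
    linarith
  have hden : (a + b + sin t) ^ 2 + cos t ^ 2 ≠ 0 := by
    rw [hsq]; exact mul_ne_zero (mul_ne_zero two_ne_zero hab) ht
  rw [div_pow, one_add_div (pow_ne_zero 2 hbt)]
  field_simp
  rw [hsq]
  linear_combination (-2 * (a + sin t)) * (hpyth + hb)

theorem continuous_inv_add_sin {a : ℝ} (ha : 1 < |a|) : Continuous fun t => (a + sin t)⁻¹ :=
  (continuous_const.add continuous_sin).inv₀ (add_sin_ne_zero ha)

theorem integral_inv_add_sin_of_sq_eq {a b : ℝ} (hb : b ^ 2 = a ^ 2 - 1) (hab : 0 < a * b) :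
    ∫ t in (0)..(2 * π), (a + sin t)⁻¹ = 2 * π / b := by
  have hb0 : b ≠ 0 := by rintro rfl; simp at hab
  have ha : 1 < |a| := by
    rw [← one_lt_sq_iff_one_lt_abs]; nlinarith [sq_pos_of_ne_zero hb0]
  have hab' : 1 < |a + b| := by
    rw [← one_lt_sq_iff_one_lt_abs]; nlinarith
  have hderiv (t : ℝ) : HasDerivAt (fun t => (t + 2 * arctan (cos t / (a + b + sin t))) / b)
      (a + sin t)⁻¹ t := by
    have := (hasDerivAt_add_two_mul_arctan_cos_div hb (add_sin_ne_zero ha t)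
      (add_sin_ne_zero hab' t)).div_const b
    rwa [div_div_cancel_left' hb0] at this
  rw [intervalIntegral.integral_eq_sub_of_hasDerivAt (fun t _ => hderiv t)
    ((continuous_inv_add_sin ha).intervalIntegrable _ _)]
  simp only [sin_two_pi, cos_two_pi, sin_zero, cos_zero]
  ring

theorem integral_inv_add_sin {a : ℝ} (ha : 1 < |a|) :
    ∫ t in (0)..(2 * π), (a + sin t)⁻¹ = 2 * π * sign a / √(a ^ 2 - 1) := by
  have ha0 : a ≠ 0 := by rintro rfl; norm_num at ha
  have hsq : 0 < a ^ 2 - 1 := by rwa [sub_pos, one_lt_sq_iff_one_lt_abs]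
  have hsign : sign a ^ 2 = 1 := by
    rcases sign_apply_eq_of_ne_zero a ha0 with h | h <;> rw [h] <;> norm_num
  rw [integral_inv_add_sin_of_sq_eq (b := sign a * √(a ^ 2 - 1)), mul_comm (sign a), ← div_div,
    div_eq_mul_inv _ (sign a), inv_sign]
  · ring
  · rw [mul_pow, sq_sqrt hsq.le, hsign, one_mul]
  · rw [← mul_assoc, mul_comm a]
    exact mul_pos (sign_mul_pos_of_ne_zero a ha0) (sqrt_pos.2 hsq)

theorem integral_cos_div_add_sin {a : ℝ} (ha : ∀ t, a + sin t ≠ 0) :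
    ∫ t in (0)..(2 * π), cos t / (a + sin t) = 0 := by
  have hderiv (t : ℝ) : HasDerivAt (fun t => log (a + sin t)) (cos t / (a + sin t)) t :=
    ((hasDerivAt_sin t).const_add a).log (ha t)
  rw [intervalIntegral.integral_eq_sub_of_hasDerivAt (fun t _ => hderiv t)
    ((continuous_cos.div (continuous_const.add continuous_sin) ha).intervalIntegrable _ _)]
  simp only [sin_two_pi, sin_zero, sub_self]

theorem Function.Periodic.intervalIntegral_comp_nat_mul {E : Type*} [NormedAddCommGroup E]
    [NormedSpace ℝ E] {f : ℝ → E} {T : ℝ} (hf : Function.Periodic f T)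
    (h_int : ∀ t₁ t₂, IntervalIntegrable f MeasureTheory.volume t₁ t₂) {n : ℕ} (hn : n ≠ 0) :
    ∫ x in (0)..T, f (n * x) = ∫ x in (0)..T, f x := by
  have := hf.intervalIntegral_add_zsmul_eq n 0 h_int
  rw [zero_add, zero_add, natCast_zsmul, nsmul_eq_mul] at this
  rw [intervalIntegral.integral_comp_mul_left _ (Nat.cast_ne_zero.2 hn), mul_zero, this,
    natCast_zsmul, ← Nat.cast_smul_eq_nsmul ℝ, smul_smul, inv_mul_cancel₀ (Nat.cast_ne_zero.2 hn),
    one_smul]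

theorem integral_sub_cos_div_add_sin {a : ℝ} (ha : 1 < |a|) (c : ℝ) :
    ∫ t in (0)..(2 * π), (c - cos t) / (a + sin t) = 2 * π * c * sign a / √(a ^ 2 - 1) := by
  have hden := add_sin_ne_zero ha
  simp_rw [sub_div, div_eq_mul_inv c]
  rw [intervalIntegral.integral_sub, intervalIntegral.integral_const_mul, integral_inv_add_sin ha,
    integral_cos_div_add_sin hden, sub_zero]
  · ring
  · exact ((continuous_inv_add_sin ha).const_smul c).intervalIntegrable _ _
  · exact (continuous_cos.div (continuous_const.add continuous_sin) hden).intervalIntegrable _ _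

theorem infinity_stability_integral_general (s₁ s₂ : ℝ) (hs₂ : 1 < |s₂|) :
    (∀ θ : ℝ, s₂ + Real.sin (6 * θ) ≠ 0) ∧
    ∫ θ in (0 : ℝ)..(2 * Real.pi),
        (-2 * (s₁ - Real.cos (6 * θ))) / (s₂ + Real.sin (6 * θ))
      = -Real.sign s₂ * 4 * Real.pi * s₁ / Real.sqrt (s₂ ^ 2 - 1) := by
  have hden := add_sin_ne_zero hs₂
  refine ⟨fun θ => hden (6 * θ), ?_⟩
  have hperiodic : Function.Periodic (fun t => (s₁ - cos t) / (s₂ + sin t)) (2 * π) := by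
    intro t
    simp only [sin_add_two_pi, cos_add_two_pi]
  have hcont : Continuous fun t => (s₁ - cos t) / (s₂ + sin t) :=
    (continuous_const.sub continuous_cos).div (continuous_const.add continuous_sin) hden
  have hrescale : ∫ θ in (0)..(2 * π), (s₁ - cos (6 * θ)) / (s₂ + sin (6 * θ))
      = ∫ t in (0)..(2 * π), (s₁ - cos t) / (s₂ + sin t) := by
    exact_mod_cast hperiodic.intervalIntegral_comp_nat_mul
      (fun _ _ => hcont.intervalIntegrable _ _) (n := 6) (by norm_num)
  simp_rw [mul_div_assoc]
  rw [intervalIntegral.integral_const_mul, hrescale, integral_sub_cos_div_add_sin hs₂]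
  ring

theorem infinity_stability_integral (s₁ s₂ : ℝ) (hs₂ : 1 < |s₂|) (hs₁ : s₁ ≠ 0) :
    (∀ θ : ℝ, s₂ + Real.sin (6 * θ) ≠ 0) ∧
    ∫ θ in (0 : ℝ)..(2 * Real.pi),
        (-2 * (s₁ - Real.cos (6 * θ))) / (s₂ + Real.sin (6 * θ))
      = -Real.sign s₂ * 4 * Real.pi * s₁ / Real.sqrt (s₂ ^ 2 - 1) :=
  infinity_stability_integral_general s₁ s₂ hs₂
end

section
/- Suppose p₂ ≠ 0 and (r, θ) with r > 0 satisfies 0 = 2rp₁ + 2r²(s₁ − cos 6θ) and 0 = p₂ + r(s₂ + sin 6θ), with −π/6 < θ < π/6 and p₂ − p₁s₂ + p₂s₁ ≠ 0. Then t = tan(3θ) satisfies the quadratic equation (−p₂ + p₁s₂ − p₂s₁)t² + 2p₁t + (p₂ + p₁s₂ − p₂s₁) = 0, hence t = (p₁ ± √(p₁² + p₂² − (p₁s₂ − p₂s₁)²))/(p₂ − p₁s₂ + p₂s₁). -/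
theorem equilibria_quadratic (p₁ p₂ s₁ s₂ r θ : ℝ)
    (hp₂ : p₂ ≠ 0) (hr : 0 < r)
    (hθ₁ : -(Real.pi / 6) < θ) (hθ₂ : θ < Real.pi / 6)
    (hden : p₂ - p₁ * s₂ + p₂ * s₁ ≠ 0)
    (e₁ : 0 = 2 * r * p₁ + 2 * r ^ 2 * (s₁ - Real.cos (6 * θ)))
    (e₂ : 0 = p₂ + r * (s₂ + Real.sin (6 * θ))) :
    (-p₂ + p₁ * s₂ - p₂ * s₁) * Real.tan (3 * θ) ^ 2
        + 2 * p₁ * Real.tan (3 * θ) + (p₂ + p₁ * s₂ - p₂ * s₁) = 0 ∧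
    (Real.tan (3 * θ)
        = (p₁ + Real.sqrt (p₁ ^ 2 + p₂ ^ 2 - (p₁ * s₂ - p₂ * s₁) ^ 2))
            / (p₂ - p₁ * s₂ + p₂ * s₁) ∨
      Real.tan (3 * θ)
        = (p₁ - Real.sqrt (p₁ ^ 2 + p₂ ^ 2 - (p₁ * s₂ - p₂ * s₁) ^ 2))
            / (p₂ - p₁ * s₂ + p₂ * s₁)) := by
  have hcpos : 0 < Real.cos (3 * θ) := by
    apply Real.cos_pos_of_mem_Ioo
    constructor <;> [nlinarith [Real.pi_pos]; nlinarith [Real.pi_pos]]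
  have hc : Real.cos (3 * θ) ≠ 0 := ne_of_gt hcpos
  set s : ℝ := Real.sin (3 * θ) with hs
  set c : ℝ := Real.cos (3 * θ) with hcc
  have hpyth : s ^ 2 + c ^ 2 = 1 := Real.sin_sq_add_cos_sq (3 * θ)
  have h6 : (6 : ℝ) * θ = 2 * (3 * θ) := by ring
  have hsin6 : Real.sin (6 * θ) = 2 * s * c := by
    rw [h6, Real.sin_two_mul]
  have hcos6 : Real.cos (6 * θ) = c ^ 2 - s ^ 2 := by
    rw [h6, Real.cos_two_mul]
    linear_combination hpyth
  rw [hsin6] at e₂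
  rw [hcos6] at e₁
  have hr' : r ≠ 0 := ne_of_gt hr
  have hp₁ : p₁ = r * (c ^ 2 - s ^ 2 - s₁) := by
    have h : 2 * r * (p₁ - r * (c ^ 2 - s ^ 2 - s₁)) = 0 := by linarith [e₁]; 
    have := mul_eq_zero.mp h
    rcases this with h' | h'
    · exact absurd h' (by positivity)
    · linarith
  have hp₂' : p₂ = -(r * (s₂ + 2 * s * c)) := by linarith
  have htan : Real.tan (3 * θ) = s / c := Real.tan_eq_sin_div_cos (3 * θ)
  have key : (-p₂ + p₁ * s₂ - p₂ * s₁) * s ^ 2 + 2 * p₁ * (s * c)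
      + (p₂ + p₁ * s₂ - p₂ * s₁) * c ^ 2 = 0 := by
    rw [hp₁, hp₂']
    linear_combination (r * (s₂ * (c ^ 2 - s ^ 2) + 2 * s₁ * s * c)) * hpyth
  have quad : (-p₂ + p₁ * s₂ - p₂ * s₁) * Real.tan (3 * θ) ^ 2
      + 2 * p₁ * Real.tan (3 * θ) + (p₂ + p₁ * s₂ - p₂ * s₁) = 0 := by
    rw [htan]
    have hrw : (-p₂ + p₁ * s₂ - p₂ * s₁) * (s / c) ^ 2 + 2 * p₁ * (s / c)
        + (p₂ + p₁ * s₂ - p₂ * s₁)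
        = ((-p₂ + p₁ * s₂ - p₂ * s₁) * s ^ 2 + 2 * p₁ * (s * c)
            + (p₂ + p₁ * s₂ - p₂ * s₁) * c ^ 2) / c ^ 2 := by
      field_simp
    rw [hrw, key, zero_div]
  refine ⟨quad, ?_⟩
  set t : ℝ := Real.tan (3 * θ)
  set d : ℝ := p₂ - p₁ * s₂ + p₂ * s₁ with hd
  have hsq : (d * t - p₁) ^ 2 = p₁ ^ 2 + p₂ ^ 2 - (p₁ * s₂ - p₂ * s₁) ^ 2 := by
    linear_combination (-(p₂ - p₁ * s₂ + p₂ * s₁)) * quad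
  have hnn : 0 ≤ p₁ ^ 2 + p₂ ^ 2 - (p₁ * s₂ - p₂ * s₁) ^ 2 := by
    rw [← hsq]; positivity
  have hsqrt : Real.sqrt (p₁ ^ 2 + p₂ ^ 2 - (p₁ * s₂ - p₂ * s₁) ^ 2)
      = |d * t - p₁| := by
    rw [← hsq, Real.sqrt_sq_eq_abs]
  rcases abs_cases (d * t - p₁) with ⟨h1, _⟩ | ⟨h1, _⟩
  · left
    rw [hsqrt, h1, eq_div_iff hden]
    ring
  · right
    rw [hsqrt, h1, eq_div_iff hden]
    ring
end

section
/- Let A(x,y) = (2/p₂)(p₁ − p₂s₁s₂ + p₁s₂² + (2p₁s₂ − p₂s₁)x + (p₂x − p₁y + p₂s₂)y) with p₂ ≠ 0 and p₁² + p₂² ≠ 0. Then the solutions of the system A(x,y) = 0, x² + y² = 1 are given by (x,y) = (−s₂, ±√(1−s₂²)) (when |s₂| ≤ 1) together with x± = (p₁p₂s₁ − p₁²s₂ ± p₂√D)/(p₁²+p₂²), y± = (p₂²s₁ − p₁p₂s₂ ∓ p₁√D)/(p₁²+p₂²), where D = p₁² + p₂² − (p₂s₁ − p₁s₂)² ≥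 0. In particular, if |s₂| > 1 and D < 0, the system has no real solutions. -/
/-!
On the unit circle, `(p₂ / 2) · A(x, y) = (x + s₂)(p₁x + p₂y + p₁s₂ - p₂s₁) - p₁(x² + y² - 1)`, so the
zeros of `A` on the circle are its intersections with the vertical line `x = -s₂` and with the line
`p₁x + p₂y = c`, `c = p₂s₁ - p₁s₂`. On the second line the coordinate `t = p₂x - p₁y` satisfies
`c² + t² = (p₁² + p₂²)(x² + y²)`, so the circle cuts it where `t = ±√D`.
-/

open Real

theorem Real.sq_eq_iff_eq_sqrt_or_eq_neg_sqrt {y d : ℝ} :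
    y ^ 2 = d ↔ 0 ≤ d ∧ (y = √d ∨ y = -√d) := by
  constructor
  · rintro rfl
    refine ⟨sq_nonneg y, ?_⟩
    rw [sqrt_sq_eq_abs]
    rcases abs_choice y with h | h <;> [left; right] <;> linarith
  · rintro ⟨hd, rfl | rfl⟩
    · exact sq_sqrt hd
    · rw [neg_sq, sq_sqrt hd]

theorem mem_circle_and_eq_iff {x y a : ℝ} :
    x = a ∧ x ^ 2 + y ^ 2 = 1 ↔
      |a| ≤ 1 ∧ x = a ∧ (y = √(1 - a ^ 2) ∨ y = -√(1 - a ^ 2)) := by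
  have hy (hx : x = a) : x ^ 2 + y ^ 2 = 1 ↔ y ^ 2 = 1 - a ^ 2 := by
    subst hx
    constructor <;> intro h <;> linarith
  rw [← sq_le_one_iff_abs_le_one, ← sub_nonneg]
  constructor
  · rintro ⟨hx, hc⟩
    obtain ⟨ha, hroot⟩ := sq_eq_iff_eq_sqrt_or_eq_neg_sqrt.1 ((hy hx).1 hc)
    exact ⟨ha, hx, hroot⟩
  · rintro ⟨ha, hx, hroot⟩
    exact ⟨hx, (hy hx).2 (sq_eq_iff_eq_sqrt_or_eq_neg_sqrt.2 ⟨ha, hroot⟩)⟩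

theorem eq_div_and_eq_div_iff_dot_and_cross {p₁ p₂ x y c t : ℝ} (hq : p₁ ^ 2 + p₂ ^ 2 ≠ 0) :
    x = (p₁ * c + p₂ * t) / (p₁ ^ 2 + p₂ ^ 2) ∧ y = (p₂ * c - p₁ * t) / (p₁ ^ 2 + p₂ ^ 2) ↔
      p₁ * x + p₂ * y = c ∧ p₂ * x - p₁ * y = t := by
  rw [eq_div_iff hq, eq_div_iff hq]
  constructor
  · rintro ⟨hx, hy⟩
    refine ⟨mul_left_cancel₀ hq ?_, mul_left_cancel₀ hq ?_⟩
    · linear_combination p₁ * hx + p₂ * hy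
    · linear_combination p₂ * hx - p₁ * hy
  · rintro ⟨rfl, rfl⟩
    constructor <;> ring

theorem mem_circle_and_dot_eq_iff {p₁ p₂ x y c : ℝ} (hq : p₁ ^ 2 + p₂ ^ 2 ≠ 0) :
    p₁ * x + p₂ * y = c ∧ x ^ 2 + y ^ 2 = 1 ↔
      0 ≤ p₁ ^ 2 + p₂ ^ 2 - c ^ 2 ∧
        ((x = (p₁ * c + p₂ * √(p₁ ^ 2 + p₂ ^ 2 - c ^ 2)) / (p₁ ^ 2 + p₂ ^ 2) ∧
            y = (p₂ * c - p₁ * √(p₁ ^ 2 + p₂ ^ 2 - c ^ 2)) / (p₁ ^ 2 + p₂ ^ 2)) ∨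
          (x = (p₁ * c - p₂ * √(p₁ ^ 2 + p₂ ^ 2 - c ^ 2)) / (p₁ ^ 2 + p₂ ^ 2) ∧
            y = (p₂ * c + p₁ * √(p₁ ^ 2 + p₂ ^ 2 - c ^ 2)) / (p₁ ^ 2 + p₂ ^ 2))) := by
  have hminus (s : ℝ) : (x = (p₁ * c - p₂ * s) / (p₁ ^ 2 + p₂ ^ 2) ∧
      y = (p₂ * c + p₁ * s) / (p₁ ^ 2 + p₂ ^ 2)) ↔
      p₁ * x + p₂ * y = c ∧ p₂ * x - p₁ * y = -s := by
    rw [← eq_div_and_eq_div_iff_dot_and_cross hq, mul_neg, mul_neg, ← sub_eq_add_neg,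
      sub_neg_eq_add]
  have hcircle : p₁ * x + p₂ * y = c →
      (x ^ 2 + y ^ 2 = 1 ↔ (p₂ * x - p₁ * y) ^ 2 = p₁ ^ 2 + p₂ ^ 2 - c ^ 2) := by
    rintro rfl
    constructor <;> intro h
    · linear_combination (p₁ ^ 2 + p₂ ^ 2) * h
    · exact mul_left_cancel₀ hq (by linear_combination h)
  rw [eq_div_and_eq_div_iff_dot_and_cross hq, hminus, ← and_or_left]
  constructor
  · rintro ⟨hline, hc⟩
    obtain ⟨hD, hroot⟩ := sq_eq_iff_eq_sqrt_or_eq_neg_sqrt.1 ((hcircle hline).1 hc)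
    exact ⟨hD, hline, hroot⟩
  · rintro ⟨hD, hline, hroot⟩
    exact ⟨hline, (hcircle hline).2 (sq_eq_iff_eq_sqrt_or_eq_neg_sqrt.2 ⟨hD, hroot⟩)⟩

theorem A_eq_zero_and_mem_circle_iff {p₁ p₂ s₁ s₂ x y : ℝ} (hp₂ : p₂ ≠ 0) :
    ((2 / p₂) * (p₁ - p₂ * s₁ * s₂ + p₁ * s₂ ^ 2 + (2 * p₁ * s₂ - p₂ * s₁) * x
        + (p₂ * x - p₁ * y + p₂ * s₂) * y) = 0 ∧ x ^ 2 + y ^ 2 = 1) ↔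
      (x = -s₂ ∨ p₁ * x + p₂ * y = p₂ * s₁ - p₁ * s₂) ∧ x ^ 2 + y ^ 2 = 1 := by
  refine and_congr_left fun hc => ?_
  have hfactor : p₁ - p₂ * s₁ * s₂ + p₁ * s₂ ^ 2 + (2 * p₁ * s₂ - p₂ * s₁) * x
      + (p₂ * x - p₁ * y + p₂ * s₂) * y
      = (x - -s₂) * (p₁ * x + p₂ * y - (p₂ * s₁ - p₁ * s₂)) := by
    linear_combination -p₁ * hc
  rw [hfactor, mul_eq_zero, mul_eq_zero, div_eq_zero_iff, sub_eq_zero, sub_eq_zero]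
  simp [hp₂]

theorem A_zeros_on_circle_general (p₁ p₂ s₁ s₂ : ℝ) (hp₂ : p₂ ≠ 0) :
    (∀ x y : ℝ,
        ((2 / p₂) * (p₁ - p₂ * s₁ * s₂ + p₁ * s₂ ^ 2
              + (2 * p₁ * s₂ - p₂ * s₁) * x
              + (p₂ * x - p₁ * y + p₂ * s₂) * y) = 0 ∧ x ^ 2 + y ^ 2 = 1)
          ↔ ((|s₂| ≤ 1 ∧ x = -s₂ ∧
                (y = Real.sqrt (1 - s₂ ^ 2) ∨ y = -Real.sqrt (1 - s₂ ^ 2)))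
            ∨ (0 ≤ p₁ ^ 2 + p₂ ^ 2 - (p₂ * s₁ - p₁ * s₂) ^ 2 ∧
                ((x = (p₁ * p₂ * s₁ - p₁ ^ 2 * s₂
                        + p₂ * Real.sqrt (p₁ ^ 2 + p₂ ^ 2 - (p₂ * s₁ - p₁ * s₂) ^ 2))
                      / (p₁ ^ 2 + p₂ ^ 2) ∧
                  y = (p₂ ^ 2 * s₁ - p₁ * p₂ * s₂
                        - p₁ * Real.sqrt (p₁ ^ 2 + p₂ ^ 2 - (p₂ * s₁ - p₁ * s₂) ^ 2))
                      / (p₁ ^ 2 + p₂ ^ 2)) ∨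
                 (x = (p₁ * p₂ * s₁ - p₁ ^ 2 * s₂
                        - p₂ * Real.sqrt (p₁ ^ 2 + p₂ ^ 2 - (p₂ * s₁ - p₁ * s₂) ^ 2))
                      / (p₁ ^ 2 + p₂ ^ 2) ∧
                  y = (p₂ ^ 2 * s₁ - p₁ * p₂ * s₂
                        + p₁ * Real.sqrt (p₁ ^ 2 + p₂ ^ 2 - (p₂ * s₁ - p₁ * s₂) ^ 2))
                      / (p₁ ^ 2 + p₂ ^ 2)))))) ∧
    (1 < |s₂| → p₁ ^ 2 + p₂ ^ 2 - (p₂ * s₁ - p₁ * s₂) ^ 2 < 0 →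
      ∀ x y : ℝ,
        ¬((2 / p₂) * (p₁ - p₂ * s₁ * s₂ + p₁ * s₂ ^ 2
              + (2 * p₁ * s₂ - p₂ * s₁) * x
              + (p₂ * x - p₁ * y + p₂ * s₂) * y) = 0 ∧ x ^ 2 + y ^ 2 = 1)) := by
  have hq : p₁ ^ 2 + p₂ ^ 2 ≠ 0 := by positivity
  refine ⟨fun x y => ?_, fun hs hD x y hxy => ?_⟩
  · rw [A_eq_zero_and_mem_circle_iff hp₂, or_and_right, mem_circle_and_eq_iff,
      mem_circle_and_dot_eq_iff hq, abs_neg, neg_sq,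
      show p₁ * p₂ * s₁ - p₁ ^ 2 * s₂ = p₁ * (p₂ * s₁ - p₁ * s₂) by ring,
      show p₂ ^ 2 * s₁ - p₁ * p₂ * s₂ = p₂ * (p₂ * s₁ - p₁ * s₂) by ring]
  · obtain ⟨hx | hline, hc⟩ := (A_eq_zero_and_mem_circle_iff hp₂).1 hxy
    · exact hs.not_ge (abs_neg s₂ ▸ (mem_circle_and_eq_iff.1 ⟨hx, hc⟩).1)
    · exact hD.not_ge ((mem_circle_and_dot_eq_iff hq).1 ⟨hline, hc⟩).1

theorem A_zeros_on_circle (p₁ p₂ s₁ s₂ : ℝ) (hp₂ : p₂ ≠ 0)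
    (hp : (p₁, p₂) ≠ (0, 0)) :
    (∀ x y : ℝ,
        ((2 / p₂) * (p₁ - p₂ * s₁ * s₂ + p₁ * s₂ ^ 2
              + (2 * p₁ * s₂ - p₂ * s₁) * x
              + (p₂ * x - p₁ * y + p₂ * s₂) * y) = 0 ∧ x ^ 2 + y ^ 2 = 1)
          ↔ ((|s₂| ≤ 1 ∧ x = -s₂ ∧
                (y = Real.sqrt (1 - s₂ ^ 2) ∨ y = -Real.sqrt (1 - s₂ ^ 2)))
            ∨ (0 ≤ p₁ ^ 2 + p₂ ^ 2 - (p₂ * s₁ - p₁ * s₂) ^ 2 ∧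
                ((x = (p₁ * p₂ * s₁ - p₁ ^ 2 * s₂
                        + p₂ * Real.sqrt (p₁ ^ 2 + p₂ ^ 2 - (p₂ * s₁ - p₁ * s₂) ^ 2))
                      / (p₁ ^ 2 + p₂ ^ 2) ∧
                  y = (p₂ ^ 2 * s₁ - p₁ * p₂ * s₂
                        - p₁ * Real.sqrt (p₁ ^ 2 + p₂ ^ 2 - (p₂ * s₁ - p₁ * s₂) ^ 2))
                      / (p₁ ^ 2 + p₂ ^ 2)) ∨
                 (x = (p₁ * p₂ * s₁ - p₁ ^ 2 * s₂
                        - p₂ * Real.sqrt (p₁ ^ 2 + p₂ ^ 2 - (p₂ * s₁ - p₁ * s₂) ^ 2))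
                      / (p₁ ^ 2 + p₂ ^ 2) ∧
                  y = (p₂ ^ 2 * s₁ - p₁ * p₂ * s₂
                        + p₁ * Real.sqrt (p₁ ^ 2 + p₂ ^ 2 - (p₂ * s₁ - p₁ * s₂) ^ 2))
                      / (p₁ ^ 2 + p₂ ^ 2)))))) ∧
    (1 < |s₂| → p₁ ^ 2 + p₂ ^ 2 - (p₂ * s₁ - p₁ * s₂) ^ 2 < 0 →
      ∀ x y : ℝ,
        ¬((2 / p₂) * (p₁ - p₂ * s₁ * s₂ + p₁ * s₂ ^ 2
              + (2 * p₁ * s₂ - p₂ * s₁) * x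
              + (p₂ * x - p₁ * y + p₂ * s₂) * y) = 0 ∧ x ^ 2 + y ^ 2 = 1)) :=
  A_zeros_on_circle_general p₁ p₂ s₁ s₂ hp₂
end

section
/- Suppose |s₂| > 1 and p₂ ≠ 0, and suppose p₁² + p₂² − (p₂s₁ − p₁s₂)² < 0. Then the function A(θ) = (2/p₂)(p₁ − p₂s₁s₂ + p₁s₂² + (2p₁s₂ − p₂s₁)sin(6θ) + (p₂ sin(6θ) − p₁ cos(6θ) + p₂s₂) cos(6θ)) has no zeros, i.e., A(θ) ≠ 0 for all θ ∈ ℝ. -/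
theorem A_no_zeros (p₁ p₂ s₁ s₂ : ℝ) (hs₂ : 1 < |s₂|) (hp₂ : p₂ ≠ 0)
    (hD : p₁ ^ 2 + p₂ ^ 2 - (p₂ * s₁ - p₁ * s₂) ^ 2 < 0) :
    ∀ θ : ℝ,
      (2 / p₂) * (p₁ - p₂ * s₁ * s₂ + p₁ * s₂ ^ 2
          + (2 * p₁ * s₂ - p₂ * s₁) * Real.sin (6 * θ)
          + (p₂ * Real.sin (6 * θ) - p₁ * Real.cos (6 * θ) + p₂ * s₂)
              * Real.cos (6 * θ)) ≠ 0 := by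
  intro θ
  set s := Real.sin (6 * θ) with hs_def
  set c := Real.cos (6 * θ) with hc_def
  have hsc : s ^ 2 + c ^ 2 = 1 := Real.sin_sq_add_cos_sq _
  have habs : |s| ≤ 1 := Real.abs_sin_le_one _
  have h1 : s₂ + s ≠ 0 := by
    intro h
    have : s₂ = -s := by linarith
    rw [this, abs_neg] at hs₂
    linarith
  have h2 : p₁ * (s₂ + s) - p₂ * s₁ + p₂ * c ≠ 0 := by
    intro h
    have hb : (p₁ * s + p₂ * c) ^ 2 ≤ p₁ ^ 2 + p₂ ^ 2 := by
      nlinarith [sq_nonneg (p₁ * c - p₂ * s)]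
    have heq : p₁ * s + p₂ * c = p₂ * s₁ - p₁ * s₂ := by linarith
    rw [heq] at hb
    linarith
  have hfac : p₁ - p₂ * s₁ * s₂ + p₁ * s₂ ^ 2
      + (2 * p₁ * s₂ - p₂ * s₁) * s
      + (p₂ * s - p₁ * c + p₂ * s₂) * c
      = (s₂ + s) * (p₁ * (s₂ + s) - p₂ * s₁ + p₂ * c) := by
    linear_combination (-p₁) * hsc
  rw [hfac]
  exact mul_ne_zero (div_ne_zero two_ne_zero hp₂) (mul_ne_zero h1 h2)
end
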